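/- Let λ ∈ ℝ, α > 0, 0 < β < α, δ > 0, and set γ = √(α² − β²). If x ∈ ℝ satisfies (x/√(δ² + x²)) · K_{λ−3/2}(α√(δ² + x²)) / K_{λ−1/2}(α√(δ² + x²)) = β/α (the mode equation of the generalized hyperbolic distribution GH(λ, α, β, δ, 0)), then x > (β/γ²)·[λ − 3/2 + √((λ − 3/2)² + δ²γ²)]. -/

import Mathlib

open Real MeasureTheory

/-- Modified Bessel function of the second kind. -/
noncomputable def besselK (ν x : ℝ) : ℝ :=
  ∫ t in Set.Ioi (0:ℝ), Real.exp (-x * Real.cosh t) * Real.cosh (ν * t)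

/-!
Write `μ = λ - 3/2` and `s = α √(δ² + x²)`. The Turán-type inequality `K_μ² < K_{μ-1} K_{μ+1}`
and the recurrence `K_{μ+1} - K_{μ-1} = (2μ/s) K_μ` show that `ρ = K_{μ+1}(s) / K_μ(s)` satisfies
`s ρ² - 2μρ - s > 0`, i.e. `s ρ > μ + √(μ² + s²)`. The mode equation reads
`α² x K_μ(s) = β s K_{μ+1}(s)`, so `α² x > β (μ + √(μ² + s²))`; squaring gives
`γ² x² - 2μβx - δ²β² > 0`, and since `x > 0` it lies beyond the positive root of this quadratic.
-/

open Set Filter Topology Asymptotics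

lemma cosh_le_exp_abs (u : ℝ) : cosh u ≤ exp |u| := by
  rw [← cosh_abs, cosh_eq]
  linarith [exp_le_exp.2 (neg_le_self (abs_nonneg u))]

lemma abs_sinh_le_exp_abs (u : ℝ) : |sinh u| ≤ exp |u| := by
  rw [abs_sinh]
  exact (sinh_lt_cosh _).le.trans (by simpa using cosh_le_exp_abs |u|)

lemma abs_cosh_mul_le {t : ℝ} (ht : 0 ≤ t) (ν : ℝ) : |cosh (ν * t)| ≤ exp (|ν| * t) := by
  rw [abs_of_pos (cosh_pos _), ← abs_of_nonneg ht, ← abs_mul, abs_of_nonneg ht]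
  exact cosh_le_exp_abs _

lemma abs_sinh_mul_le {t : ℝ} (ht : 0 ≤ t) (ν : ℝ) : |sinh (ν * t)| ≤ exp (|ν| * t) := by
  have := abs_sinh_le_exp_abs (ν * t)
  rwa [abs_mul, abs_of_nonneg ht] at this

lemma eventually_mul_sub_mul_cosh_le_neg {x : ℝ} (hx : 0 < x) (c : ℝ) :
    ∀ᶠ t in atTop, c * t - x * cosh t ≤ -t := by
  filter_upwards [eventually_ge_atTop (4 * (|c| + 1) / x)] with t ht
  have ht0 : 0 ≤ t := le_trans (by positivity) ht
  have hcosh : t ^ 2 / 4 ≤ cosh t := by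
    rw [cosh_eq]
    linarith [quadratic_le_exp_of_nonneg ht0, exp_pos (-t)]
  have hxt : 4 * (|c| + 1) ≤ x * t := by rwa [div_le_iff₀' hx] at ht
  nlinarith [le_abs_self c, mul_le_mul_of_nonneg_left hcosh hx.le]

section Decay

variable {x : ℝ} {f : ℝ → ℝ} {c : ℝ}

lemma isBigO_exp_neg_mul_cosh_mul (hx : 0 < x) (hf : ∀ t, 0 ≤ t → |f t| ≤ exp (c * t)) :
    (fun t => exp (-x * cosh t) * f t) =O[atTop] fun t => exp (-1 * t) := by
  refine IsBigO.of_bound 1 ?_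
  filter_upwards [eventually_mul_sub_mul_cosh_le_neg hx c, eventually_ge_atTop 0] with t hle ht
  rw [one_mul, norm_mul, norm_of_nonneg (exp_pos _).le, norm_of_nonneg (exp_pos _).le]
  calc exp (-x * cosh t) * |f t| ≤ exp (-x * cosh t) * exp (c * t) := by gcongr; exact hf t ht
    _ = exp (c * t - x * cosh t) := by rw [← exp_add]; ring_nf
    _ ≤ exp (-1 * t) := exp_le_exp.2 (by linarith)

lemma integrableOn_exp_neg_mul_cosh_mul (hx : 0 < x) (hfc : Continuous f)
    (hf : ∀ t, 0 ≤ t → |f t| ≤ exp (c * t)) :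
    IntegrableOn (fun t => exp (-x * cosh t) * f t) (Ioi 0) :=
  integrable_of_isBigO_exp_neg one_pos (by fun_prop) (isBigO_exp_neg_mul_cosh_mul hx hf)

lemma tendsto_exp_neg_mul_cosh_mul (hx : 0 < x) (hf : ∀ t, 0 ≤ t → |f t| ≤ exp (c * t)) :
    Tendsto (fun t => exp (-x * cosh t) * f t) atTop (𝓝 0) :=
  (isBigO_exp_neg_mul_cosh_mul hx hf).trans_tendsto
    (by simpa using tendsto_exp_neg_atTop_nhds_zero)

end Decay

lemma setIntegral_Ioi_pos {f : ℝ → ℝ} {a : ℝ} (hf : IntegrableOn f (Ioi a))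
    (hpos : ∀ t ∈ Ioi a, 0 < f t) : 0 < ∫ t in Ioi a, f t := by
  have hsupp : Function.support f ∩ Ioi a = Ioi a := inter_eq_right.2 fun t ht => (hpos t ht).ne'
  rw [setIntegral_pos_iff_support_of_nonneg_ae
    ((ae_restrict_iff' measurableSet_Ioi).2 (.of_forall fun t ht => (hpos t ht).le)) hf, hsupp]
  simp

section BesselK

variable {x : ℝ}

lemma integrableOn_besselK_integrand (hx : 0 < x) (ν : ℝ) :
    IntegrableOn (fun t => exp (-x * cosh t) * cosh (ν * t)) (Ioi 0) :=
  integrableOn_exp_neg_mul_cosh_mul hx (by fun_prop) fun _ ht => abs_cosh_mul_le ht ν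

lemma integrableOn_exp_neg_mul_cosh_mul_sinh_mul_sinh (hx : 0 < x) (ν : ℝ) :
    IntegrableOn (fun t => exp (-x * cosh t) * (sinh t * sinh (ν * t))) (Ioi 0) := by
  refine integrableOn_exp_neg_mul_cosh_mul hx (c := 1 + |ν|) (by fun_prop) fun t ht => ?_
  rw [abs_mul, add_mul, exp_add, one_mul]
  refine mul_le_mul ?_ (abs_sinh_mul_le ht ν) (abs_nonneg _) (exp_pos _).le
  simpa [abs_of_nonneg ht] using abs_sinh_le_exp_abs t

lemma besselK_pos (hx : 0 < x) (ν : ℝ) : 0 < besselK ν x :=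
  setIntegral_Ioi_pos (integrableOn_besselK_integrand hx ν) fun _ _ => by positivity

/-- Integration by parts against `t ↦ sinh (ν t)`. -/
lemma mul_integral_exp_neg_mul_cosh_mul_sinh_mul_sinh (hx : 0 < x) (ν : ℝ) :
    x * ∫ t in Ioi 0, exp (-x * cosh t) * (sinh t * sinh (ν * t)) = ν * besselK ν x := by
  have hderiv : ∀ t ∈ Ici (0 : ℝ), HasDerivAt (fun t => exp (-x * cosh t) * sinh (ν * t))
      (ν * (exp (-x * cosh t) * cosh (ν * t))
        - x * (exp (-x * cosh t) * (sinh t * sinh (ν * t)))) t := by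
    intro t _
    exact (((hasDerivAt_cosh t).const_mul (-x)).exp.mul
      ((hasDerivAt_id' t).const_mul ν).sinh).congr_deriv (by ring)
  have hint := ((integrableOn_besselK_integrand hx ν).const_mul ν).sub
    ((integrableOn_exp_neg_mul_cosh_mul_sinh_mul_sinh hx ν).const_mul x)
  have hlim := tendsto_exp_neg_mul_cosh_mul hx (f := fun t => sinh (ν * t))
    fun _ ht => abs_sinh_mul_le ht ν
  have := integral_Ioi_of_hasDerivAt_of_tendsto' hderiv hint hlim
  rw [integral_sub ((integrableOn_besselK_integrand hx ν).const_mul ν)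
    ((integrableOn_exp_neg_mul_cosh_mul_sinh_mul_sinh hx ν).const_mul x),
    integral_const_mul, integral_const_mul] at this
  simp only [mul_zero, sinh_zero, sub_zero] at this
  rw [besselK]
  linarith

lemma besselK_add_one_sub_besselK_sub_one (hx : 0 < x) (ν : ℝ) :
    besselK (ν + 1) x - besselK (ν - 1) x = 2 * ν / x * besselK ν x := by
  have hcosh : ∀ t : ℝ, exp (-x * cosh t) * cosh ((ν + 1) * t)
      - exp (-x * cosh t) * cosh ((ν - 1) * t)
        = 2 * (exp (-x * cosh t) * (sinh t * sinh (ν * t))) := by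
    intro t
    rw [add_mul, sub_mul, one_mul, cosh_add, cosh_sub]
    ring
  rw [besselK, besselK, ← integral_sub (integrableOn_besselK_integrand hx _)
    (integrableOn_besselK_integrand hx _)]
  simp only [hcosh]
  rw [integral_const_mul, div_mul_eq_mul_div, eq_div_iff hx.ne']
  linear_combination 2 * mul_integral_exp_neg_mul_cosh_mul_sinh_mul_sinh hx ν

/-- Turán-type inequality; it is the discriminant condition for the quadratic form
`r ↦ ∫ e^{-x cosh t} (cosh((ν-1)t) r² + 2 cosh(νt) r + cosh((ν+1)t)) dt`, which is positive
because `cosh((ν-1)t) cosh((ν+1)t) - cosh(νt)² = sinh(t)²`. -/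
lemma besselK_sq_lt_mul (hx : 0 < x) (ν : ℝ) :
    besselK ν x ^ 2 < besselK (ν - 1) x * besselK (ν + 1) x := by
  have hquad : ∀ r : ℝ,
      0 < besselK (ν - 1) x * (r * r) + 2 * besselK ν x * r + besselK (ν + 1) x := by
    intro r
    have hint := integrableOn_besselK_integrand hx
    have hrepr : besselK (ν - 1) x * (r * r) + 2 * besselK ν x * r + besselK (ν + 1) x
        = ∫ t in Ioi 0, (r * r) * (exp (-x * cosh t) * cosh ((ν - 1) * t))
          + (2 * r) * (exp (-x * cosh t) * cosh (ν * t))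
          + exp (-x * cosh t) * cosh ((ν + 1) * t) := by
      rw [integral_add, integral_add, integral_const_mul, integral_const_mul]
      · simp only [besselK]
        ring
      all_goals first
        | exact (hint _).const_mul _
        | exact ((hint _).const_mul _).add ((hint _).const_mul _)
        | exact hint _
    rw [hrepr]
    refine setIntegral_Ioi_pos ((((hint _).const_mul _).add ((hint _).const_mul _)).add
      (hint _)) fun t ht => ?_
    have hsinh : 0 < sinh t := sinh_pos_iff.2 ht
    have hc : 0 < cosh ((ν - 1) * t) := cosh_pos _
    have hid : cosh ((ν - 1) * t) * cosh ((ν + 1) * t) = cosh (ν * t) ^ 2 + sinh t ^ 2 := by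
      rw [sub_mul, add_mul, one_mul, cosh_sub, cosh_add]
      nlinarith [cosh_sq_sub_sinh_sq (ν * t), cosh_sq_sub_sinh_sq t]
    have : 0 < cosh ((ν - 1) * t) * (r * r) + 2 * r * cosh (ν * t) + cosh ((ν + 1) * t) := by
      refine pos_of_mul_pos_right ?_ hc.le
      nlinarith [sq_nonneg (cosh ((ν - 1) * t) * r + cosh (ν * t)), pow_pos hsinh 2]
    have hw := exp_pos (-x * cosh t)
    nlinarith
  have := discrim_lt_zero (besselK_pos hx (ν - 1)).ne' hquad
  rw [discrim] at this
  nlinarith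

end BesselK

lemma add_sqrt_lt_mul_iff {a b c X : ℝ} (ha : 0 < a) (hc : 0 ≤ c) (hX : 0 < X) :
    b + √(b ^ 2 + a * c) < a * X ↔ 2 * b * X + c < a * X ^ 2 := by
  have hS := sq_sqrt (show 0 ≤ b ^ 2 + a * c by positivity)
  have hS0 := sqrt_nonneg (b ^ 2 + a * c)
  constructor
  · intro h
    have : b ^ 2 + a * c < (a * X - b) ^ 2 := by nlinarith
    nlinarith
  · intro h
    have hb : b ≤ √(b ^ 2 + a * c) := by nlinarith [mul_nonneg ha.le hc]
    by_contra hle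
    nlinarith [mul_pos ha hX]

lemma add_sqrt_mul_besselK_lt {s : ℝ} (hs : 0 < s) (μ : ℝ) :
    (μ + √(μ ^ 2 + s ^ 2)) * besselK μ s < s * besselK (μ + 1) s := by
  have hA := besselK_pos hs μ
  have hB := besselK_pos hs (μ + 1)
  have hturan := besselK_sq_lt_mul hs μ
  have hrec := besselK_add_one_sub_besselK_sub_one hs μ
  have hkey : s * besselK μ s ^ 2 + 2 * μ * besselK μ s * besselK (μ + 1) s
      < s * besselK (μ + 1) s ^ 2 := by
    rw [show besselK (μ - 1) s = besselK (μ + 1) s - 2 * μ / s * besselK μ s by linarith]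
      at hturan
    have := mul_lt_mul_of_pos_left hturan hs
    field_simp at this
    linarith
  have hquad : 2 * μ * (besselK (μ + 1) s / besselK μ s) + s
      < s * (besselK (μ + 1) s / besselK μ s) ^ 2 := by
    rw [div_pow, ← sub_pos]
    field_simp
    linarith
  have := (add_sqrt_lt_mul_iff hs hs.le (div_pos hB hA)).2 hquad
  rw [sq s, ← lt_div_iff₀ hA]
  calc _ < s * (besselK (μ + 1) s / besselK μ s) := this
    _ = _ := by ring

theorem stmt_1 (lam α β δ γ : ℝ) (hα : 0 < α) (hβ : 0 < β) (hβα : β < α) (hδ : 0 < δ)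
    (hγ : γ = Real.sqrt (α ^ 2 - β ^ 2)) (x : ℝ)
    (hx : x / Real.sqrt (δ ^ 2 + x ^ 2) *
        (besselK (lam - 3 / 2) (α * Real.sqrt (δ ^ 2 + x ^ 2)) /
          besselK (lam - 1 / 2) (α * Real.sqrt (δ ^ 2 + x ^ 2))) = β / α) :
    x > β / γ ^ 2 * (lam - 3 / 2 + Real.sqrt ((lam - 3 / 2) ^ 2 + δ ^ 2 * γ ^ 2)) := by
  set μ := lam - 3 / 2
  set y := √(δ ^ 2 + x ^ 2)
  have hy : 0 < y := sqrt_pos.2 (by positivity)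
  have hy2 : y ^ 2 = δ ^ 2 + x ^ 2 := sq_sqrt (by positivity)
  have hs : 0 < α * y := mul_pos hα hy
  have hγ2 : γ ^ 2 = α ^ 2 - β ^ 2 := hγ ▸ sq_sqrt (by nlinarith)
  have hγ2pos : 0 < γ ^ 2 := by rw [hγ2]; nlinarith
  have hA := besselK_pos hs μ
  have hB := besselK_pos hs (μ + 1)
  rw [show lam - 1 / 2 = μ + 1 by ring] at hx
  have hmode : β * (α * y) * besselK (μ + 1) (α * y) = α ^ 2 * x * besselK μ (α * y) := by
    rw [div_mul_div_comm, div_eq_div_iff (by positivity) hα.ne'] at hx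
    linear_combination (-α) * hx
  have hX : 0 < x / β := by
    refine div_pos (pos_of_mul_pos_right ?_ (sq_nonneg α)) hβ
    exact pos_of_mul_pos_left (hmode ▸ by positivity) hA.le
  have hlin : μ + √(μ ^ 2 + α ^ 2 * (δ ^ 2 + x ^ 2)) < α ^ 2 * (x / β) := by
    have h := add_sqrt_mul_besselK_lt hs μ
    rw [mul_pow, hy2] at h
    rw [← mul_div_assoc, lt_div_iff₀ hβ]
    refine lt_of_mul_lt_mul_right ?_ hA.le
    linear_combination β * h + hmode
  have hquad := (add_sqrt_lt_mul_iff (by positivity) (by positivity) hX).1 hlin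
  have hx2 : β ^ 2 * (x / β) ^ 2 = x ^ 2 := by field_simp
  have hquad' : 2 * μ * (x / β) + δ ^ 2 < γ ^ 2 * (x / β) ^ 2 := by
    rw [hγ2, sub_mul, hx2]
    linarith
  have h := (add_sqrt_lt_mul_iff hγ2pos (sq_nonneg δ) hX).2 hquad'
  rw [mul_comm (γ ^ 2) (δ ^ 2)] at h
  rw [gt_iff_lt, div_mul_eq_mul_div, div_lt_iff₀ hγ2pos]
  calc β * (μ + √(μ ^ 2 + δ ^ 2 * γ ^ 2)) < β * (γ ^ 2 * (x / β)) := by gcongr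
    _ = x * γ ^ 2 := by field_simp
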